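/- arXiv:2405.04284 — 3 statements merged into one kernel-verified Lean document; each statement's English description precedes it below -/
import Mathlib

section
/- Let f be the generating function of an offspring distribution p on the nonnegative integers with mean m ∈ (0,1), and let g be the generating function of a probability measure ν on the positive integers. If g(f(s)) − g(f(0)) = m^α · g(s) for all s ∈ [0,1] and some α > 0, then ν is a quasi-stationary distribution of the Galton–Watson process with offspring distribution p, i.e., P_ν(N_n = j | N_n > 0) = ν(j) for all j ≥ 1 and n ≥ 0. -/
open MeasureTheory Filter Topology

noncomputable def genFun (p : ℕ → ℝ) (s : ℝ) : ℝ := ∑' j, p j * s ^ j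

noncomputable def genFunIter (p : ℕ → ℝ) : ℕ → ℝ → ℝ
  | 0, s => s
  | n + 1, s => genFun p (genFunIter p n s)

/-!
Iterating the functional equation along `f_{n+1} = f ∘ f_n` gives
`g(f_n(s)) - g(f_n(0)) = m^{αn} g(s)` on `[0,1]`. The left side is the generating function of
`P_ν(N_n = ·)` minus its constant term, so comparing coefficients gives
`P_ν(N_n = j) = m^{αn} ν(j)` for `j ≥ 1`, and evaluating at `s = 1` gives
`P_ν(N_n > 0) = m^{αn}`.
-/

open Set

section PowerSeries

variable {a b c : ℕ → ℝ} {s : ℝ}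

theorem abs_le_one_of_mem_Icc (hs : s ∈ Icc (0 : ℝ) 1) : |s| ≤ 1 :=
  abs_le.mpr ⟨by linarith [hs.1], hs.2⟩

theorem summable_of_tsum_eq_one (h : ∑' j, a j = 1) : Summable a := by
  by_contra ha
  simp [tsum_eq_zero_of_not_summable ha] at h

theorem norm_mul_pow_le_abs (c : ℕ → ℝ) (hs : |s| ≤ 1) (j : ℕ) :
    ‖c j * s ^ j‖ ≤ |c j| := by
  rw [norm_mul, norm_pow, Real.norm_eq_abs, Real.norm_eq_abs]
  exact mul_le_of_le_one_right (abs_nonneg _) (pow_le_one₀ (abs_nonneg s) hs)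

theorem Summable.mul_pow_of_abs_le_one (hc : Summable c) (hs : |s| ≤ 1) :
    Summable fun j => c j * s ^ j :=
  hc.abs.of_norm_bounded (norm_mul_pow_le_abs c hs)

theorem genFun_zero (c : ℕ → ℝ) : genFun c 0 = c 0 := by
  rw [genFun, tsum_eq_single 0 fun j hj => by simp [hj], pow_zero, mul_one]

theorem genFun_one (c : ℕ → ℝ) : genFun c 1 = ∑' j, c j := by
  simp [genFun]

theorem genFun_mem_Icc (ha : ∀ j, 0 ≤ a j) (h1 : ∑' j, a j = 1) (hs : s ∈ Icc (0 : ℝ) 1) :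
    genFun a s ∈ Icc (0 : ℝ) 1 :=
  ⟨tsum_nonneg fun j => mul_nonneg (ha j) (pow_nonneg hs.1 j),
    h1 ▸ Summable.tsum_le_tsum (fun j => mul_le_of_le_one_right (ha j) (pow_le_one₀ hs.1 hs.2))
      ((summable_of_tsum_eq_one h1).mul_pow_of_abs_le_one (abs_le_one_of_mem_Icc hs))
      (summable_of_tsum_eq_one h1)⟩

theorem tendsto_genFun_nhdsGT_zero (hc : Summable c) :
    Tendsto (genFun c) (𝓝[>] 0) (𝓝 (c 0)) := by
  rw [← genFun_zero c]
  refine tendsto_tsum_of_dominated_convergence hc.abs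
    (fun j => (((continuous_pow j).tendsto 0).mono_left nhdsWithin_le_nhds).const_mul (c j)) ?_
  filter_upwards [Ioo_mem_nhdsGT one_pos] with s hs
  exact norm_mul_pow_le_abs c (abs_le_one_of_mem_Icc (Ioo_subset_Icc_self hs))

theorem apply_zero_eq_zero_of_genFun_eq_zero (hc : Summable c)
    (h : ∀ s ∈ Ioo (0 : ℝ) 1, genFun c s = 0) : c 0 = 0 :=
  tendsto_nhds_unique (tendsto_genFun_nhdsGT_zero hc) <| tendsto_const_nhds.congr' <| by
    filter_upwards [Ioo_mem_nhdsGT one_pos] with s hs using (h s hs).symm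

theorem eq_zero_of_genFun_eq_zero (hc : Summable c)
    (h : ∀ s ∈ Ioo (0 : ℝ) 1, genFun c s = 0) : c = 0 := by
  funext k
  induction k generalizing c with
  | zero => exact apply_zero_eq_zero_of_genFun_eq_zero hc h
  | succ k ih =>
    refine ih ((summable_nat_add_iff 1).mpr hc) fun s hs => ?_
    -- `genFun c s = c 0 + s * genFun (c ∘ (· + 1)) s` with `c 0 = 0` and `s ≠ 0`
    have hsplit :=
      (hc.mul_pow_of_abs_le_one (abs_le_one_of_mem_Icc (Ioo_subset_Icc_self hs))).tsum_eq_zero_add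
    simp only [apply_zero_eq_zero_of_genFun_eq_zero hc h, zero_mul, zero_add, pow_succ,
      ← mul_assoc, tsum_mul_right] at hsplit
    rw [← genFun, h s hs] at hsplit
    exact (mul_eq_zero.mp hsplit.symm).resolve_right hs.1.ne'

theorem eq_of_genFun_eq (ha : Summable a) (hb : Summable b)
    (h : ∀ s ∈ Ioo (0 : ℝ) 1, genFun a s = genFun b s) : a = b := by
  refine sub_eq_zero.mp <| eq_zero_of_genFun_eq_zero (ha.sub hb) fun s hs => ?_
  have hs' := abs_le_one_of_mem_Icc (Ioo_subset_Icc_self hs)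
  simp only [genFun, Pi.sub_apply, sub_mul]
  rw [(ha.mul_pow_of_abs_le_one hs').tsum_sub (hb.mul_pow_of_abs_le_one hs')]
  exact sub_eq_zero.mpr (h s hs)

theorem apply_eq_of_genFun_eq_mul_add_const {r c : ℝ} (ha : Summable a) (hb : Summable b)
    (h : ∀ s ∈ Ioo (0 : ℝ) 1, genFun a s = r * genFun b s + c) {j : ℕ} (hj : j ≠ 0) :
    a j = r * b j := by
  have hcoeff : a = fun i => r * b i + if i = 0 then c else 0 := by
    refine eq_of_genFun_eq ha ((hb.mul_left r).add (hasSum_ite_eq 0 c).summable)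
      fun s hs => ?_
    have hs' := abs_le_one_of_mem_Icc (Ioo_subset_Icc_self hs)
    rw [h s hs]
    simp only [genFun]
    rw [← (((hb.mul_pow_of_abs_le_one hs').hasSum.mul_left r).add
      (hasSum_ite_eq 0 c)).tsum_eq]
    congr 1 with i
    rcases i with _ | i <;> simp [mul_assoc]
  simpa [hj] using congrFun hcoeff j

end PowerSeries

theorem hasSum_mixture_mul_pow {ν : ℕ → ℝ} {q : ℕ → ℕ → ℝ} (hν : ∀ k, 0 ≤ ν k)
    (hν_sum : Summable ν) (hq : ∀ k i, 0 ≤ q k i) (hq_sum : ∀ k, ∑' i, q k i = 1) {s : ℝ}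
    (hs : s ∈ Icc (0 : ℝ) 1) :
    HasSum (fun i => (∑' k, ν k * q k i) * s ^ i) (∑' k, ν k * genFun (q k) s) := by
  set F : ℕ × ℕ → ℝ := fun x => ν x.1 * (q x.1 x.2 * s ^ x.2)
  have hF_nonneg : 0 ≤ F := fun x => mul_nonneg (hν _) (mul_nonneg (hq _ _) (pow_nonneg hs.1 _))
  have hrows (k : ℕ) : HasSum (fun i => F (k, i)) (ν k * genFun (q k) s) :=
    ((summable_of_tsum_eq_one (hq_sum k)).mul_pow_of_abs_le_one
      (abs_le_one_of_mem_Icc hs)).hasSum.mul_left (ν k)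
  have hF : Summable F := by
    refine (summable_prod_of_nonneg hF_nonneg).mpr ⟨fun k => (hrows k).summable, ?_⟩
    refine hν_sum.of_nonneg_of_le (fun k => tsum_nonneg fun i => hF_nonneg (k, i)) fun k => ?_
    rw [(hrows k).tsum_eq]
    exact mul_le_of_le_one_right (hν k) (genFun_mem_Icc (hq k) (hq_sum k) hs).2
  have hcols (i : ℕ) : HasSum (fun k => F (k, i)) ((∑' k, ν k * q k i) * s ^ i) := by
    have hcol : Summable fun k => ν k * q k i * s ^ i := by
      simpa [F, mul_assoc] using
        ((summable_prod_of_nonneg fun x => hF_nonneg x.swap).mp hF.prod_symm).1 i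
    rw [← tsum_mul_right]
    simpa only [F, mul_assoc] using hcol.hasSum
  rw [(hF.hasSum.prod_fiberwise hrows).tsum_eq]
  exact ((Equiv.prodComm ℕ ℕ).hasSum_iff.mpr hF.hasSum).prod_fiberwise hcols

theorem sub_comp_iterate_eq_pow_mul {α R : Type*} [CommRing R] {f : α → α} {G : α → R}
    {S : Set α} {a : α} {r : R} (hf : MapsTo f S S) (ha : a ∈ S)
    (hG : ∀ s ∈ S, G (f s) - G (f a) = r * G s) (n : ℕ) :
    ∀ s ∈ S, G (f^[n] s) - G (f^[n] a) = r ^ n * (G s - G a) := by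
  induction n with
  | zero => simp
  | succ n ih =>
    intro s hs
    rw [Function.iterate_succ_apply', Function.iterate_succ_apply', pow_succ', mul_assoc,
      ← ih s hs]
    linear_combination hG _ (hf.iterate n hs) - hG _ (hf.iterate n ha)

theorem genFunIter_eq_iterate (p : ℕ → ℝ) (n : ℕ) : genFunIter p n = (genFun p)^[n] := by
  induction n with
  | zero => rfl
  | succ n ih => funext s; rw [Function.iterate_succ_apply', ← ih]; rfl

theorem genFun_genFunIter_eq {p ν : ℕ → ℝ} {r : ℝ}
    (hf : MapsTo (genFun p) (Icc 0 1) (Icc 0 1)) (hν : ν 0 = 0)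
    (heq : ∀ s ∈ Icc (0 : ℝ) 1,
      genFun ν (genFun p s) - genFun ν (genFun p 0) = r * genFun ν s)
    (n : ℕ) :
    ∀ s ∈ Icc (0 : ℝ) 1,
      genFun ν (genFunIter p n s) = r ^ n * genFun ν s + genFun ν (genFunIter p n 0) := by
  intro s hs
  have h := sub_comp_iterate_eq_pow_mul hf ⟨le_rfl, zero_le_one⟩ heq n s hs
  rw [genFun_zero, hν, sub_zero, ← genFunIter_eq_iterate] at h
  linear_combination h

theorem stmt0_general (p ν : ℕ → ℝ) (m α : ℝ)
    (hm_pos : 0 < m)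
    (hν_nonneg : ∀ j, 0 ≤ ν j) (hν_zero : ν 0 = 0) (hν_sum : ∑' j, ν j = 1)
    (law : ℕ → ℕ → ℕ → ℝ)
    (hlaw_nonneg : ∀ k n j, 0 ≤ law k n j)
    (hlaw_sum : ∀ k n, ∑' j, law k n j = 1)
    (hlaw_gf : ∀ k n, ∀ s ∈ Set.Icc (0 : ℝ) 1,
        ∑' j, law k n j * s ^ j = genFunIter p n s ^ k)
    (heq : ∀ s ∈ Set.Icc (0 : ℝ) 1,
        (∑' j, ν j * genFun p s ^ j) - (∑' j, ν j * genFun p 0 ^ j)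
          = m ^ α * ∑' j, ν j * s ^ j) :
    ∀ n : ℕ, ∀ j : ℕ, 1 ≤ j →
      (∑' k, ν k * law k n j) / (1 - ∑' k, ν k * law k n 0) = ν j := by
  intro n j hj
  set μ : ℕ → ℝ := fun i => ∑' k, ν k * law k n i
  have h0 : (0 : ℝ) ∈ Icc (0 : ℝ) 1 := ⟨le_rfl, zero_le_one⟩
  have h1 : (1 : ℝ) ∈ Icc (0 : ℝ) 1 := ⟨zero_le_one, le_rfl⟩
  -- `f = f_1` is the generating function of the probability vector `law 1 1`
  have hf : MapsTo (genFun p) (Icc 0 1) (Icc 0 1) := fun s hs => by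
    simpa [genFunIter, genFun, hlaw_gf 1 1 s hs] using
      genFun_mem_Icc (hlaw_nonneg 1 1) (hlaw_sum 1 1) hs
  have hiter := genFun_genFunIter_eq hf hν_zero heq n
  have hμ (s : ℝ) (hs : s ∈ Icc (0 : ℝ) 1) :
      HasSum (fun i => μ i * s ^ i) (genFun ν (genFunIter p n s)) := by
    simpa only [genFun, hlaw_gf _ n s hs] using hasSum_mixture_mul_pow hν_nonneg
      (summable_of_tsum_eq_one hν_sum) (fun k => hlaw_nonneg k n) (fun k => hlaw_sum k n) hs
  have hμ0 : μ 0 = genFun ν (genFunIter p n 0) := (genFun_zero μ).symm.trans (hμ 0 h0).tsum_eq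
  have hnum : μ j = (m ^ α) ^ n * ν j := by
    refine apply_eq_of_genFun_eq_mul_add_const (c := genFun ν (genFunIter p n 0))
      (by simpa using (hμ 1 h1).summable) (summable_of_tsum_eq_one hν_sum) (fun s hs => ?_)
      (by omega)
    exact (hμ s (Ioo_subset_Icc_self hs)).tsum_eq.trans (hiter s (Ioo_subset_Icc_self hs))
  have hden : 1 - μ 0 = (m ^ α) ^ n := by
    have hiter1 : genFunIter p n 1 = 1 := by simpa [hlaw_sum] using (hlaw_gf 1 n 1 h1).symm
    have h := hiter 1 h1
    rw [hiter1, genFun_one, hν_sum, ← hμ0] at h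
    linarith
  show μ j / (1 - μ 0) = ν j
  rw [hnum, hden, mul_div_cancel_left₀ _ (pow_pos (Real.rpow_pos_of_pos hm_pos α) n).ne']

/-- if the generating function `g` of a probability measure `ν` on ℕ₊
satisfies `g(f(s)) - g(f(0)) = m^α g(s)` on `[0,1]` for some `α > 0`, then `ν` is a
quasi-stationary distribution of the subcritical GW-process, i.e.
`P_ν(N_n = j | N_n > 0) = ν(j)` for all `j ≥ 1`, `n ≥ 0`.
Here `law k n j = P_k(N_n = j)` is the law of the GW-process started from `k`
particles, characterized by its generating function `f_n(s)^k`. -/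
theorem stmt0 (p ν : ℕ → ℝ) (m α : ℝ)
    (hp_nonneg : ∀ j, 0 ≤ p j) (hp_sum : ∑' j, p j = 1)
    (hm : m = ∑' j : ℕ, (j : ℝ) * p j) (hm_pos : 0 < m) (hm_lt : m < 1)
    (hν_nonneg : ∀ j, 0 ≤ ν j) (hν_zero : ν 0 = 0) (hν_sum : ∑' j, ν j = 1)
    (law : ℕ → ℕ → ℕ → ℝ)
    (hlaw_nonneg : ∀ k n j, 0 ≤ law k n j)
    (hlaw_sum : ∀ k n, ∑' j, law k n j = 1)
    (hlaw_gf : ∀ k n, ∀ s ∈ Set.Icc (0 : ℝ) 1,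
        ∑' j, law k n j * s ^ j = genFunIter p n s ^ k)
    (hα : 0 < α)
    (heq : ∀ s ∈ Set.Icc (0 : ℝ) 1,
        (∑' j, ν j * genFun p s ^ j) - (∑' j, ν j * genFun p 0 ^ j)
          = m ^ α * ∑' j, ν j * s ^ j) :
    ∀ n : ℕ, ∀ j : ℕ, 1 ≤ j →
      (∑' k, ν k * law k n j) / (1 - ∑' k, ν k * law k n 0) = ν j :=
  stmt0_general p ν m α hm_pos hν_nonneg hν_zero hν_sum law hlaw_nonneg hlaw_sum hlaw_gf heq
end

section
/- Suppose the offspring distribution p has mean m ∈ (0,1), all moments finite, and limsup_n (p_n)^{1/n} < 1. Then there exists a constant c₃ > 0 such that sup_n E[e^{c₃ N_n} | N_n > 0] < ∞, i.e., the limit lim_n E[e^{c₃ N̂_n}] is finite, where N̂_n has the law of N_n conditioned on N_n > 0. -/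
/-!
Write `f` for the offspring generating function and `g(s) = (f(s) - 1) / (s - 1)` for its slope
at `1`: a power series with nonnegative coefficients, so `g` is increasing, with `g(0) = 1 - p₀ > 0`
and `g(1) = m < 1`. The root condition makes `f` analytic beyond `1`, hence `g` is Lipschitz on
some `[0, R]` with `R > 1` and `g(s) < 1` for some `s ∈ (1, R]`. Then `f` maps `[0, 1]` and
`[1, s]` into themselves and `f_n(t) - 1 = (t - 1) ∏_{k<n} g(f_k(t))`, so with `c₃ = log s`

  `1 + (f_n(s) - 1) / (1 - f_n(0)) = 1 + (s - 1) ∏_{k<n} g(f_k(s)) / g(f_k(0))`.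

Since `f_k(s) - f_k(0) ≤ s g(s)^k`, the Lipschitz bound makes the factors `1 + O(g(s)^k)`, and
the product converges.
-/

open MeasureTheory Filter Topology

open Finset Set

lemma exists_le_mul_pow_of_limsup_rpow_lt_one {p : ℕ → ℝ} (hp0 : ∀ n, 0 ≤ p n)
    (hp_le_one : ∀ n, p n ≤ 1) (hlim : limsup (fun n : ℕ => p n ^ ((n : ℝ)⁻¹)) atTop < 1) :
    ∃ C b : ℝ, 0 < b ∧ b < 1 ∧ ∀ n, p n ≤ C * b ^ n := by
  obtain ⟨b, hLb, hb1⟩ := exists_between (max_lt hlim one_pos)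
  have hb0 : 0 < b := (le_max_right _ _).trans_lt hLb
  have hbdd : IsBoundedUnder (· ≤ ·) atTop fun n : ℕ => p n ^ ((n : ℝ)⁻¹) :=
    isBoundedUnder_of ⟨1, fun n => Real.rpow_le_one (hp0 n) (hp_le_one n) (by positivity)⟩
  obtain ⟨N, hN⟩ := eventually_atTop.1 <|
    (eventually_lt_of_limsup_lt ((le_max_left _ _).trans_lt hLb) hbdd).and (eventually_ne_atTop 0)
  refine ⟨(b ^ N)⁻¹, b, hb0, hb1, fun n => ?_⟩
  rcases le_or_gt n N with hn | hn
  · calc p n ≤ 1 := hp_le_one n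
      _ ≤ (b ^ N)⁻¹ * b ^ n := by
        rw [inv_mul_eq_div, one_le_div₀ (by positivity)]
        exact pow_le_pow_of_le_one hb0.le hb1.le hn
  · obtain ⟨hlt, hn0⟩ := hN n hn.le
    calc p n = (p n ^ ((n : ℝ)⁻¹)) ^ n := (Real.rpow_inv_natCast_pow (hp0 n) hn0).symm
      _ ≤ b ^ n := pow_le_pow_left₀ (Real.rpow_nonneg (hp0 n) _) hlt.le n
      _ ≤ (b ^ N)⁻¹ * b ^ n := le_mul_of_one_le_left (by positivity)
        ((one_le_inv₀ (by positivity)).2 (pow_le_one₀ hb0.le hb1.le))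

lemma summable_pow_mul_mul_pow_of_le_mul_pow {p : ℕ → ℝ} {C b t : ℝ} (hp0 : ∀ j, 0 ≤ p j)
    (hpC : ∀ j, p j ≤ C * b ^ j) (hb : 0 ≤ b) (ht : 0 ≤ t) (hbt : b * t < 1) (k : ℕ) :
    Summable fun j : ℕ => (j : ℝ) ^ k * p j * t ^ j := by
  have hgeom : Summable fun j : ℕ => C * ((j : ℝ) ^ k * (b * t) ^ j) :=
    (summable_pow_mul_geometric_of_norm_lt_one k
      (by rwa [Real.norm_of_nonneg (mul_nonneg hb ht)])).mul_left C
  refine hgeom.of_nonneg_of_le (fun j => by have := hp0 j; positivity) fun j => ?_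
  calc (j : ℝ) ^ k * p j * t ^ j ≤ (j : ℝ) ^ k * (C * b ^ j) * t ^ j := by gcongr; exact hpC j
    _ = C * ((j : ℝ) ^ k * (b * t) ^ j) := by ring

lemma geom_sum_le_sq_mul_pow {t R : ℝ} (ht : t ∈ Icc 0 R) (hR : 1 ≤ R) (j : ℕ) :
    ∑ i ∈ range j, t ^ i ≤ (j : ℝ) ^ 2 * R ^ j := by
  calc ∑ i ∈ range j, t ^ i ≤ ∑ _i ∈ range j, R ^ j := sum_le_sum fun i hi =>
        (pow_le_pow_left₀ ht.1 ht.2 i).trans (pow_le_pow_right₀ hR (mem_range.1 hi).le)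
    _ = (j : ℝ) * R ^ j := by rw [sum_const, card_range, nsmul_eq_mul]
    _ ≤ (j : ℝ) ^ 2 * R ^ j := by
        gcongr
        exact_mod_cast Nat.le_self_pow two_ne_zero j

lemma geom_sum_sub_geom_sum_le {x y R : ℝ} (hy : 0 ≤ y) (hyx : y ≤ x) (hxR : x ≤ R) (hR : 1 ≤ R)
    (j : ℕ) : ∑ i ∈ range j, x ^ i - ∑ i ∈ range j, y ^ i ≤ (j : ℝ) ^ 2 * R ^ j * (x - y) := by
  have hterm : ∀ i ∈ range j, x ^ i - y ^ i ≤ j * R ^ j * (x - y) := fun i hi => by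
    have hi : i ≤ j := (mem_range.1 hi).le
    have hmax : max |x| |y| = x := by
      rw [abs_of_nonneg hy, abs_of_nonneg (hy.trans hyx), max_eq_left hyx]
    calc x ^ i - y ^ i ≤ |x ^ i - y ^ i| := le_abs_self _
      _ ≤ |x - y| * i * max |x| |y| ^ (i - 1) := abs_pow_sub_pow_le x y i
      _ ≤ (x - y) * j * R ^ j := by
        rw [hmax, abs_of_nonneg (sub_nonneg.2 hyx)]
        have hpow : x ^ (i - 1) ≤ R ^ j :=
          (pow_le_pow_left₀ (hy.trans hyx) hxR _).trans (pow_le_pow_right₀ hR (by omega))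
        gcongr
        exact pow_nonneg (hy.trans hyx) _
      _ = j * R ^ j * (x - y) := by ring
  calc ∑ i ∈ range j, x ^ i - ∑ i ∈ range j, y ^ i = ∑ i ∈ range j, (x ^ i - y ^ i) :=
        (sum_sub_distrib ..).symm
    _ ≤ ∑ _i ∈ range j, j * R ^ j * (x - y) := sum_le_sum hterm
    _ = (j : ℝ) ^ 2 * R ^ j * (x - y) := by rw [sum_const, card_range, nsmul_eq_mul]; ring

/-- `(genFun p s - 1) / (s - 1)`, as a power series that also makes sense at `s = 1`. -/
noncomputable def genFunSlope (p : ℕ → ℝ) (s : ℝ) : ℝ := ∑' j, p j * ∑ i ∈ range j, s ^ i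

lemma genFunSlope_one (p : ℕ → ℝ) : genFunSlope p 1 = ∑' j : ℕ, (j : ℝ) * p j := by
  simp [genFunSlope, mul_comm]

lemma genFunSlope_nonneg {p : ℕ → ℝ} (hp : ∀ j, 0 ≤ p j) {t : ℝ} (ht : 0 ≤ t) :
    0 ≤ genFunSlope p t :=
  tsum_nonneg fun j => mul_nonneg (hp j) (sum_nonneg fun i _ => pow_nonneg ht i)

section Slope

variable {p : ℕ → ℝ} {R : ℝ} (hp : ∀ j, 0 ≤ p j) (hR : 1 ≤ R)
  (hRsum : Summable fun j : ℕ => (j : ℝ) ^ 2 * p j * R ^ j)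
include hp hR hRsum

lemma summable_genFunSlope {t : ℝ} (ht : t ∈ Icc 0 R) :
    Summable fun j => p j * ∑ i ∈ range j, t ^ i := by
  refine hRsum.of_nonneg_of_le
    (fun j => mul_nonneg (hp j) (sum_nonneg fun i _ => pow_nonneg ht.1 i)) fun j => ?_
  rw [mul_comm ((j : ℝ) ^ 2), mul_assoc]
  exact mul_le_mul_of_nonneg_left (geom_sum_le_sq_mul_pow ht hR j) (hp j)

lemma genFun_sub_one_eq (hp1 : HasSum p 1) {t : ℝ} (ht : t ∈ Icc 0 R) :
    genFun p t - 1 = (t - 1) * genFunSlope p t := by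
  have h := hp1.add ((summable_genFunSlope hp hR hRsum ht).hasSum.mul_left (t - 1))
  rw [genFun, (h.congr_fun fun j => ?_).tsum_eq, add_sub_cancel_left, genFunSlope]
  linear_combination (-p j) * geom_sum_mul t j

lemma genFunSlope_monotoneOn : MonotoneOn (genFunSlope p) (Icc 0 R) := fun _ hx _ hy hxy =>
  (summable_genFunSlope hp hR hRsum hx).tsum_le_tsum
    (fun j => mul_le_mul_of_nonneg_left (sum_le_sum fun i _ => pow_le_pow_left₀ hx.1 hxy i) (hp j))
    (summable_genFunSlope hp hR hRsum hy)

lemma genFunSlope_sub_le {x y : ℝ} (hy : 0 ≤ y) (hyx : y ≤ x) (hxR : x ≤ R) :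
    genFunSlope p x - genFunSlope p y ≤ (∑' j : ℕ, (j : ℝ) ^ 2 * p j * R ^ j) * (x - y) := by
  rw [genFunSlope, genFunSlope,
    ← (summable_genFunSlope hp hR hRsum ⟨hy.trans hyx, hxR⟩).tsum_sub
      (summable_genFunSlope hp hR hRsum ⟨hy, hyx.trans hxR⟩), ← tsum_mul_right]
  refine ((summable_genFunSlope hp hR hRsum ⟨hy.trans hyx, hxR⟩).sub
    (summable_genFunSlope hp hR hRsum ⟨hy, hyx.trans hxR⟩)).tsum_le_tsum (fun j => ?_)
    (hRsum.mul_right _)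
  have h := mul_le_mul_of_nonneg_left (geom_sum_sub_geom_sum_le hy hyx hxR hR j) (hp j)
  linear_combination h

lemma genFunSlope_zero_pos (hm : 0 < ∑' j : ℕ, (j : ℝ) * p j) : 0 < genFunSlope p 0 := by
  obtain ⟨j, hj⟩ : ∃ j : ℕ, 0 < (j : ℝ) * p j := by
    by_contra! h
    exact hm.not_ge (tsum_nonpos h)
  have hj0 : j ≠ 0 := by rintro rfl; simp at hj
  refine (summable_genFunSlope hp hR hRsum ⟨le_rfl, zero_le_one.trans hR⟩).tsum_pos
    (fun i => mul_nonneg (hp i) (sum_nonneg fun k _ => pow_nonneg le_rfl k)) j ?_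
  simpa [hj0] using pos_of_mul_pos_right hj (Nat.cast_nonneg j)

end Slope

lemma exists_genFunSlope_lt_one {p : ℕ → ℝ} {R : ℝ} (hp : ∀ j, 0 ≤ p j) (hR : 1 < R)
    (hRsum : Summable fun j : ℕ => (j : ℝ) ^ 2 * p j * R ^ j) (h1 : genFunSlope p 1 < 1) :
    ∃ s, 1 < s ∧ s ≤ R ∧ genFunSlope p s < 1 := by
  set L := ∑' j : ℕ, (j : ℝ) ^ 2 * p j * R ^ j
  have hL : 0 ≤ L := tsum_nonneg fun j => by have := hp j; positivity
  set s := min R (1 + (1 - genFunSlope p 1) / (L + 1))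
  have hs1 : 1 < s := lt_min hR (lt_add_of_pos_right 1 (div_pos (by linarith) (by linarith)))
  have hsL : (L + 1) * (s - 1) ≤ 1 - genFunSlope p 1 := by
    rw [← le_div_iff₀' (by linarith)]
    linarith [min_le_right R (1 + (1 - genFunSlope p 1) / (L + 1))]
  refine ⟨s, hs1, min_le_left _ _, ?_⟩
  have := genFunSlope_sub_le hp hR.le hRsum zero_le_one hs1.le (min_le_left _ _)
  nlinarith

lemma exists_tendsto_prod_range_of_abs_sub_one_le {q : ℕ → ℝ} {K θ : ℝ} (hθ0 : 0 ≤ θ)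
    (hθ1 : θ < 1) (hq : ∀ k, |q k - 1| ≤ K * θ ^ k) :
    ∃ P, Tendsto (fun n => ∏ k ∈ range n, q k) atTop (𝓝 P) := by
  have hsum : Summable fun k => q k - 1 :=
    Summable.of_norm_bounded ((summable_geometric_of_lt_one hθ0 hθ1).mul_left K) hq
  have hmul : Multipliable q := by
    simpa using Real.multipliable_one_add_of_summable hsum
  exact ⟨_, hmul.tendsto_prod_tprod_nat⟩

section Iterates

variable {p : ℕ → ℝ} {R s : ℝ} (hp : ∀ j, 0 ≤ p j) (hp1 : HasSum p 1)
  (hRsum : Summable fun j : ℕ => (j : ℝ) ^ 2 * p j * R ^ j) (hs1 : 1 ≤ s) (hsR : s ≤ R)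
  (hgs : genFunSlope p s ≤ 1)
include hp hp1 hRsum hs1 hsR hgs

lemma genFun_mem_uIcc {t : ℝ} (ht : t ∈ Icc 0 s) : genFun p t ∈ uIcc 1 t := by
  have hR := hs1.trans hsR
  have htR : t ∈ Icc 0 R := ⟨ht.1, ht.2.trans hsR⟩
  have hg0 := genFunSlope_nonneg hp ht.1
  have hg1 : genFunSlope p t ≤ 1 :=
    (genFunSlope_monotoneOn hp hR hRsum htR ⟨zero_le_one.trans hs1, hsR⟩ ht.2).trans hgs
  have h := genFun_sub_one_eq hp hR hRsum hp1 htR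
  rcases le_total t 1 with h1 | h1
  · rw [uIcc_of_ge h1]; constructor <;> nlinarith
  · rw [uIcc_of_le h1]; constructor <;> nlinarith

lemma genFunIter_mem_uIcc {t : ℝ} (ht : t ∈ Icc 0 s) (n : ℕ) :
    genFunIter p n t ∈ uIcc 1 t := by
  induction n with
  | zero => exact right_mem_uIcc
  | succ n ih =>
    exact uIcc_subset_uIcc left_mem_uIcc ih <| genFun_mem_uIcc hp hp1 hRsum hs1 hsR hgs <|
      uIcc_subset_Icc ⟨zero_le_one, hs1⟩ ht ih

lemma genFunIter_mem_Icc {t : ℝ} (ht : t ∈ Icc 0 s) (n : ℕ) : genFunIter p n t ∈ Icc 0 s :=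
  uIcc_subset_Icc ⟨zero_le_one, hs1⟩ ht (genFunIter_mem_uIcc hp hp1 hRsum hs1 hsR hgs ht n)

lemma genFunIter_sub_one_eq_prod {t : ℝ} (ht : t ∈ Icc 0 s) (n : ℕ) :
    genFunIter p n t - 1 = (t - 1) * ∏ k ∈ range n, genFunSlope p (genFunIter p k t) := by
  induction n with
  | zero => simp [genFunIter]
  | succ n ih =>
    have hmem := genFunIter_mem_Icc hp hp1 hRsum hs1 hsR hgs ht n
    rw [prod_range_succ, ← mul_assoc, ← ih]
    exact genFun_sub_one_eq hp (hs1.trans hsR) hRsum hp1 ⟨hmem.1, hmem.2.trans hsR⟩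

lemma prod_genFunSlope_genFunIter_le {t : ℝ} (ht : t ∈ Icc 0 s) (n : ℕ) :
    ∏ k ∈ range n, genFunSlope p (genFunIter p k t) ≤ genFunSlope p s ^ n := by
  have hmem := genFunIter_mem_Icc hp hp1 hRsum hs1 hsR hgs ht
  calc ∏ k ∈ range n, genFunSlope p (genFunIter p k t) ≤ ∏ _k ∈ range n, genFunSlope p s :=
        prod_le_prod (fun k _ => genFunSlope_nonneg hp (hmem k).1) fun k _ =>
          genFunSlope_monotoneOn hp (hs1.trans hsR) hRsum ⟨(hmem k).1, (hmem k).2.trans hsR⟩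
            ⟨zero_le_one.trans hs1, hsR⟩ (hmem k).2
    _ = genFunSlope p s ^ n := by rw [prod_const, card_range]

lemma abs_genFunSlope_div_sub_one_le (hg0 : 0 < genFunSlope p 0) (k : ℕ) :
    |genFunSlope p (genFunIter p k s) / genFunSlope p (genFunIter p k 0) - 1| ≤
      (∑' j : ℕ, (j : ℝ) ^ 2 * p j * R ^ j) * s / genFunSlope p 0 * genFunSlope p s ^ k := by
  have hR := hs1.trans hsR
  have h0 : (0 : ℝ) ∈ Icc 0 s := ⟨le_rfl, zero_le_one.trans hs1⟩
  have hs : s ∈ Icc 0 s := ⟨zero_le_one.trans hs1, le_rfl⟩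
  set L := ∑' j : ℕ, (j : ℝ) ^ 2 * p j * R ^ j
  set a := genFunIter p k 0
  set c := genFunIter p k s
  have ha : a ∈ Icc (0 : ℝ) 1 := by
    simpa [Set.uIcc_of_ge zero_le_one] using genFunIter_mem_uIcc hp hp1 hRsum hs1 hsR hgs h0 k
  have hc : c ∈ Icc 1 s := by
    simpa [Set.uIcc_of_le hs1] using genFunIter_mem_uIcc hp hp1 hRsum hs1 hsR hgs hs k
  have hmono := genFunSlope_monotoneOn hp hR hRsum
  have hga : genFunSlope p 0 ≤ genFunSlope p a :=
    hmono ⟨le_rfl, zero_le_one.trans hR⟩ ⟨ha.1, ha.2.trans hR⟩ ha.1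
  have hgac : genFunSlope p a ≤ genFunSlope p c :=
    hmono ⟨ha.1, ha.2.trans hR⟩ ⟨zero_le_one.trans hc.1, hc.2.trans hsR⟩ (ha.2.trans hc.1)
  have hca : c - a ≤ s * genFunSlope p s ^ k := by
    have hc1 := genFunIter_sub_one_eq_prod hp hp1 hRsum hs1 hsR hgs hs k
    have ha1 := genFunIter_sub_one_eq_prod hp hp1 hRsum hs1 hsR hgs h0 k
    have hPs := mul_le_mul_of_nonneg_left
      (prod_genFunSlope_genFunIter_le hp hp1 hRsum hs1 hsR hgs hs k) (sub_nonneg.2 hs1)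
    have hP0 := prod_genFunSlope_genFunIter_le hp hp1 hRsum hs1 hsR hgs h0 k
    linear_combination hc1 - ha1 + hPs + hP0
  have hL : 0 ≤ L := tsum_nonneg fun j => by have := hp j; positivity
  have hga0 := hg0.trans_le hga
  rw [abs_of_nonneg (sub_nonneg.2 ((one_le_div hga0).2 hgac)), div_sub_one hga0.ne',
    div_le_iff₀ hga0]
  calc genFunSlope p c - genFunSlope p a ≤ L * (c - a) :=
        genFunSlope_sub_le hp hR hRsum ha.1 (ha.2.trans hc.1) (hc.2.trans hsR)
    _ ≤ L * (s * genFunSlope p s ^ k) := mul_le_mul_of_nonneg_left hca hL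
    _ = L * s / genFunSlope p 0 * genFunSlope p s ^ k * genFunSlope p 0 := by
        field_simp
    _ ≤ L * s / genFunSlope p 0 * genFunSlope p s ^ k * genFunSlope p a := by
        gcongr
        exact mul_nonneg (div_nonneg (mul_nonneg hL hs.1) hg0.le)
          (pow_nonneg (genFunSlope_nonneg hp hs.1) k)

end Iterates

lemma exists_tendsto_one_add_genFunIter_div {p : ℕ → ℝ} {R s : ℝ} (hp : ∀ j, 0 ≤ p j)
    (hp1 : HasSum p 1) (hRsum : Summable fun j : ℕ => (j : ℝ) ^ 2 * p j * R ^ j) (hs1 : 1 ≤ s)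
    (hsR : s ≤ R) (hgs : genFunSlope p s < 1) (hg0 : 0 < genFunSlope p 0) :
    ∃ L, Tendsto (fun n => 1 + (genFunIter p n s - 1) / (1 - genFunIter p n 0)) atTop (𝓝 L) := by
  have h0 : (0 : ℝ) ∈ Icc 0 s := ⟨le_rfl, zero_le_one.trans hs1⟩
  have hs : s ∈ Icc 0 s := ⟨zero_le_one.trans hs1, le_rfl⟩
  have hratio n : (genFunIter p n s - 1) / (1 - genFunIter p n 0) = (s - 1) *
      ∏ k ∈ range n, genFunSlope p (genFunIter p k s) / genFunSlope p (genFunIter p k 0) := by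
    have hsn := genFunIter_sub_one_eq_prod hp hp1 hRsum hs1 hsR hgs.le hs n
    have h0n := genFunIter_sub_one_eq_prod hp hp1 hRsum hs1 hsR hgs.le h0 n
    rw [prod_div_distrib, hsn, mul_div_assoc]
    congr 2
    linarith
  obtain ⟨P, hP⟩ := exists_tendsto_prod_range_of_abs_sub_one_le (genFunSlope_nonneg hp hs.1) hgs
    (abs_genFunSlope_div_sub_one_le hp hp1 hRsum hs1 hsR hgs.le hg0)
  exact ⟨_, by simpa only [hratio] using (hP.const_mul (s - 1)).const_add 1⟩

theorem stmt6_general (p : ℕ → ℝ) (m : ℝ)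
    (hp_nonneg : ∀ j, 0 ≤ p j) (hp_sum : ∑' j, p j = 1)
    (hm : m = ∑' j : ℕ, (j : ℝ) * p j)
    (hm_pos : 0 < m) (hm_lt : m < 1)
    (hlimsup : Filter.limsup (fun n : ℕ => p n ^ ((n : ℝ)⁻¹)) atTop < 1) :
    ∃ c₃ > (0 : ℝ),
      BddAbove (Set.range fun n : ℕ =>
        1 + (genFunIter p n (Real.exp c₃) - 1) / (1 - genFunIter p n 0)) ∧
      ∃ L : ℝ, Tendsto (fun n : ℕ =>
        1 + (genFunIter p n (Real.exp c₃) - 1) / (1 - genFunIter p n 0)) atTop (𝓝 L) := by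
  have hp1 : HasSum p 1 := by
    refine hp_sum ▸ Summable.hasSum ?_
    by_contra h
    simp [tsum_eq_zero_of_not_summable h] at hp_sum
  obtain ⟨C, b, hb0, hb1, hpb⟩ := exists_le_mul_pow_of_limsup_rpow_lt_one hp_nonneg
    (fun n => le_hasSum hp1 n fun j _ => hp_nonneg j) hlimsup
  have hR : 1 < 2 / (1 + b) := by rw [lt_div_iff₀ (by linarith)]; linarith
  have hbR : b * (2 / (1 + b)) < 1 := by rw [mul_div_assoc', div_lt_one (by linarith)]; linarith
  have hRsum := summable_pow_mul_mul_pow_of_le_mul_pow hp_nonneg hpb hb0.le (by linarith) hbR 2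
  obtain ⟨s, hs1, hsR, hgs⟩ :=
    exists_genFunSlope_lt_one hp_nonneg hR hRsum (by rwa [genFunSlope_one, ← hm])
  have hg0 := genFunSlope_zero_pos hp_nonneg hR.le hRsum (hm ▸ hm_pos)
  obtain ⟨L, hL⟩ := exists_tendsto_one_add_genFunIter_div hp_nonneg hp1 hRsum hs1.le hsR hgs hg0
  refine ⟨Real.log s, Real.log_pos hs1, ?_⟩
  rw [Real.exp_log (by linarith)]
  exact ⟨hL.bddAbove_range, L, hL⟩

/-- if the offspring distribution has mean `m ∈ (0,1)`, finite moments of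
all orders and `limsup_n (p_n)^{1/n} < 1`, then there is `c₃ > 0` such that
`sup_n E[e^{c₃ N_n} | N_n > 0] < ∞` and `lim_n E[e^{c₃ N̂_n}]` exists and is finite.
Here `E[e^{c N_n} | N_n > 0] = 1 + (f_n(e^c) - 1)/(1 - f_n(0))`. -/
theorem stmt6 (p : ℕ → ℝ) (m : ℝ)
    (hp_nonneg : ∀ j, 0 ≤ p j) (hp_sum : ∑' j, p j = 1)
    (hm : m = ∑' j : ℕ, (j : ℝ) * p j)
    (hm_pos : 0 < m) (hm_lt : m < 1)
    (hmom : ∀ r : ℕ, Summable fun j : ℕ => (j : ℝ) ^ r * p j)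
    (hlimsup : Filter.limsup (fun n : ℕ => p n ^ ((n : ℝ)⁻¹)) atTop < 1) :
    ∃ c₃ > (0 : ℝ),
      BddAbove (Set.range fun n : ℕ =>
        1 + (genFunIter p n (Real.exp c₃) - 1) / (1 - genFunIter p n 0)) ∧
      ∃ L : ℝ, Tendsto (fun n : ℕ =>
        1 + (genFunIter p n (Real.exp c₃) - 1) / (1 - genFunIter p n 0)) atTop (𝓝 L) :=
  stmt6_general p m hp_nonneg hp_sum hm hm_pos hm_lt hlimsup
end

section
/- For s ∈ (1, c₂) with f_n(s) well defined, the identity (f_n(s) − 1)/(s − 1) = m^n · Π_{k=0}^{n−1} [1 + ε(f_k(s))/m] holds, where ε(s) := (f(s) − 1)/(s − 1) − m; consequently (f_n(s) − 1)/(m^n(s − 1)) is monotone increasing in n. -/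
open MeasureTheory Filter Topology

/-!
Writing `x_k = f_k(s)`, the quotient `(x_n - 1)/(x_0 - 1)` telescopes into the product
of the ratios `(x_{k+1} - 1)/(x_k - 1) = m + ε(x_k) = m (1 + ε(x_k)/m)`. Termwise Bernoulli,
`t^j ≥ 1 + j (t - 1)`, gives `f(t) - 1 ≥ m (t - 1)`, i.e. `ε ≥ 0` on `(1, ∞)`, so every
factor of the normalized product is at least `1`.
-/

open Finset

theorem prod_range_div_of_ne_zero {G : Type*} [CommGroupWithZero G] {y : ℕ → G}
    (hy : ∀ k, y k ≠ 0) (n : ℕ) : ∏ k ∈ range n, y (k + 1) / y k = y n / y 0 :=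
  prod_range_induction (fun k => y (k + 1) / y k) (fun k => y k / y 0) (div_self (hy 0)) n
    fun k _ => (div_mul_div_cancel₀' (hy k) _ _).symm

theorem sub_one_div_sub_one_eq_pow_mul_prod {K : Type*} [Field K] {x : ℕ → K}
    (hx : ∀ k, x k ≠ 1) {m : K} (hm : m ≠ 0) (n : ℕ) :
    (x n - 1) / (x 0 - 1)
      = m ^ n * ∏ k ∈ range n, (1 + ((x (k + 1) - 1) / (x k - 1) - m) / m) := by
  have hfactor : ∀ r : K, 1 + (r - m) / m = r / m := fun r => by field_simp; ring
  simp only [hfactor, prod_div_distrib, prod_const, card_range,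
    prod_range_div_of_ne_zero (fun k => sub_ne_zero.2 (hx k))]
  rw [mul_div_cancel₀ _ (pow_ne_zero n hm)]

theorem mean_mul_sub_one_le_genFun_sub_one {p : ℕ → ℝ} {m t : ℝ}
    (hp_nonneg : ∀ j, 0 ≤ p j) (hp : HasSum p 1)
    (hm : HasSum (fun j : ℕ => (j : ℝ) * p j) m) (ht : -1 ≤ t)
    (hpt : Summable fun j : ℕ => p j * t ^ j) :
    m * (t - 1) ≤ genFun p t - 1 := by
  refine hasSum_le (fun j => ?_) (hm.mul_right (t - 1)) (hpt.hasSum.sub hp)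
  have bernoulli : 1 + j * (t - 1) ≤ t ^ j := by
    simpa using one_add_mul_le_pow (by linarith : (-2 : ℝ) ≤ t - 1) j
  nlinarith [mul_le_mul_of_nonneg_left bernoulli (hp_nonneg j)]

theorem mean_le_genFun_sub_one_div {p : ℕ → ℝ} {m t : ℝ} (hp_nonneg : ∀ j, 0 ≤ p j)
    (hp : HasSum p 1) (hm : HasSum (fun j : ℕ => (j : ℝ) * p j) m) (ht : 1 < t)
    (hpt : Summable fun j : ℕ => p j * t ^ j) :
    m ≤ (genFun p t - 1) / (t - 1) :=
  (le_div_iff₀ (sub_pos.2 ht)).2 <|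
    mean_mul_sub_one_le_genFun_sub_one hp_nonneg hp hm (by linarith) hpt

theorem stmt8_general (p : ℕ → ℝ) (m c₂ s : ℝ)
    (hp_nonneg : ∀ j, 0 ≤ p j) (hp_sum : ∑' j, p j = 1)
    (hm : m = ∑' j : ℕ, (j : ℝ) * p j)
    (hm_summable : Summable fun j : ℕ => (j : ℝ) * p j)
    (hm_pos : 0 < m) (hs : s ∈ Set.Ioo (1 : ℝ) c₂)
    (hconv : ∀ t ∈ Set.Icc (1 : ℝ) c₂, Summable fun j : ℕ => p j * t ^ j)
    (hiter : ∀ n : ℕ, 1 < genFunIter p n s ∧ genFunIter p n s ≤ s) :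
    (∀ n : ℕ, (genFunIter p n s - 1) / (s - 1)
        = m ^ n * ∏ k ∈ Finset.range n,
            (1 + ((genFun p (genFunIter p k s) - 1) / (genFunIter p k s - 1) - m) / m)) ∧
      Monotone fun n : ℕ => (genFunIter p n s - 1) / (m ^ n * (s - 1)) := by
  set r : ℕ → ℝ := fun k =>
    1 + ((genFun p (genFunIter p k s) - 1) / (genFunIter p k s - 1) - m) / m
  have hp : HasSum p 1 :=
    hp_sum ▸ (by simpa using hconv 1 ⟨le_rfl, (hs.1.trans hs.2).le⟩ : Summable p).hasSum
  have hmean : HasSum (fun j : ℕ => (j : ℝ) * p j) m := hm ▸ hm_summable.hasSum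
  have hidentity : ∀ n : ℕ, (genFunIter p n s - 1) / (s - 1) = m ^ n * ∏ k ∈ range n, r k :=
    sub_one_div_sub_one_eq_pow_mul_prod (x := fun k => genFunIter p k s)
      (fun k => (hiter k).1.ne') hm_pos.ne'
  have hr : ∀ k, 1 ≤ r k := fun k =>
    le_add_of_nonneg_right <| div_nonneg (sub_nonneg.2 <| mean_le_genFun_sub_one_div hp_nonneg
      hp hmean (hiter k).1 (hconv _ ⟨(hiter k).1.le, (hiter k).2.trans hs.2.le⟩)) hm_pos.le
  have hnormalized : ∀ n, (genFunIter p n s - 1) / (m ^ n * (s - 1)) = ∏ k ∈ range n, r k :=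
    fun n => by
      rw [mul_comm, ← div_div, hidentity n, mul_div_cancel_left₀ _ (pow_ne_zero n hm_pos.ne')]
  refine ⟨hidentity, fun a b hab => ?_⟩
  simp only [hnormalized]
  exact prod_le_prod_of_subset_of_one_le (range_subset_range.2 hab)
    (fun k _ => zero_le_one.trans (hr k)) fun k _ _ => hr k

/-- for `s ∈ (1, c₂)` (with `1 < f_n(s) ≤ s` for all `n`, the generating
function having radius of convergence beyond `c₂`), the identity
`(f_n(s) - 1)/(s - 1) = m^n ∏_{k=0}^{n-1} (1 + ε(f_k(s))/m)` holds, where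
`ε(t) = (f(t) - 1)/(t - 1) - m`; consequently `(f_n(s) - 1)/(m^n (s-1))` is monotone
increasing in `n`. -/
theorem stmt8 (p : ℕ → ℝ) (m c₂ s : ℝ)
    (hp_nonneg : ∀ j, 0 ≤ p j) (hp_sum : ∑' j, p j = 1)
    (hm : m = ∑' j : ℕ, (j : ℝ) * p j)
    (hm_summable : Summable fun j : ℕ => (j : ℝ) * p j)
    (hm_pos : 0 < m) (hm_lt : m < 1)
    (hc₂ : 1 < c₂) (hs : s ∈ Set.Ioo (1 : ℝ) c₂)
    (hconv : ∀ t ∈ Set.Icc (1 : ℝ) c₂, Summable fun j : ℕ => p j * t ^ j)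
    (hiter : ∀ n : ℕ, 1 < genFunIter p n s ∧ genFunIter p n s ≤ s) :
    (∀ n : ℕ, (genFunIter p n s - 1) / (s - 1)
        = m ^ n * ∏ k ∈ Finset.range n,
            (1 + ((genFun p (genFunIter p k s) - 1) / (genFunIter p k s - 1) - m) / m)) ∧
      Monotone fun n : ℕ => (genFunIter p n s - 1) / (m ^ n * (s - 1)) :=
  stmt8_general p m c₂ s hp_nonneg hp_sum hm hm_summable hm_pos hs hconv hiter
end
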